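/- Let λ ≠ 0 be a real number, let t ∈ ℝ, h₀ > 0, and let y : ℝ → ℝ be three times continuously differentiable on [t−2h₀, t+h₀] with |y'''(s)| ≤ M for all s in this interval. Then for every h with 0 < h ≤ h₀, the local truncation error of the ZeroSNet scheme satisfies |y(t+h) − α₀(λ)·y(t) − α₁(λ)·y(t−h) − α₂(λ)·y(t−2h) − h·β(λ)·y'(t)| ≤ ((1 + |α₁(λ)| + 8·|α₂(λ)|)/6)·M·h³; i.e., the ZeroSNet discretization has local truncation error of order h³. -/

import Mathlib

/-- ZeroSNet coefficient α₀(λ) = 3(1+λ)/(4λ). -/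
noncomputable def zerosAlpha0 (l : ℝ) : ℝ := 3 * (1 + l) / (4 * l)

/-- ZeroSNet coefficient α₁(λ) = −1/λ. -/
noncomputable def zerosAlpha1 (l : ℝ) : ℝ := -1 / l

/-- ZeroSNet coefficient α₂(λ) = (1+λ)/(4λ). -/
noncomputable def zerosAlpha2 (l : ℝ) : ℝ := (1 + l) / (4 * l)

/-- ZeroSNet coefficient β(λ) = (3λ−1)/(2λ). -/
noncomputable def zerosBeta (l : ℝ) : ℝ := (3 * l - 1) / (2 * l)

/-!
The coefficients satisfy the order conditions `α₀ + α₁ + α₂ = 1`, `β − α₁ − 2α₂ = 1` and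
`α₁ + 4α₂ = 1`, i.e. the scheme is exact on quadratic polynomials. Hence the local truncation
error equals `E(t+h) − α₁ E(t−h) − α₂ E(t−2h)`, where `E` is the remainder of the second-order
Taylor expansion of `y` at `t`, and the Lagrange form of that remainder bounds `|E(t+s)|` by
`M |s|³ / 6`.
-/

open Set Nat

theorem iteratedDerivWithin_subset {𝕜 F : Type*} [NontriviallyNormedField 𝕜]
    [NormedAddCommGroup F] [NormedSpace 𝕜 F] {f : 𝕜 → F} {s t : Set 𝕜} {x : 𝕜} {n : ℕ}
    (st : s ⊆ t) (hs : UniqueDiffOn 𝕜 s) (ht : UniqueDiffOn 𝕜 t) (h : ContDiffOn 𝕜 n f t)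
    (hx : x ∈ s) :
    iteratedDerivWithin n f s x = iteratedDerivWithin n f t x := by
  simp only [iteratedDerivWithin_eq_iteratedFDerivWithin,
    iteratedFDerivWithin_subset st hs ht h hx]

theorem taylorWithinEval_subset {f : ℝ → ℝ} {s t : Set ℝ} {x₀ x : ℝ} {n : ℕ}
    (st : s ⊆ t) (hs : UniqueDiffOn ℝ s) (ht : UniqueDiffOn ℝ t) (h : ContDiffOn ℝ n f t)
    (hx₀ : x₀ ∈ s) :
    taylorWithinEval f n s x₀ x = taylorWithinEval f n t x₀ x := by
  simp only [taylor_within_apply]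
  refine Finset.sum_congr rfl fun k hk => ?_
  rw [iteratedDerivWithin_subset st hs ht (h.of_le ?_) hx₀]
  exact_mod_cast Finset.mem_range_succ_iff.1 hk

theorem abs_sub_taylorWithinEval_le {f : ℝ → ℝ} {a b M x₀ x : ℝ} {n : ℕ}
    (hf : ContDiffOn ℝ (n + 1) f (Icc a b))
    (hM : ∀ s ∈ Icc a b, |iteratedDerivWithin (n + 1) f (Icc a b) s| ≤ M)
    (hx₀ : x₀ ∈ Icc a b) (hx : x ∈ Icc a b) :
    |f x - taylorWithinEval f n (Icc a b) x₀ x| ≤ M * |x - x₀| ^ (n + 1) / (n + 1)! := by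
  rcases eq_or_ne x₀ x with rfl | hne
  · simp
  have hab : a < b := by
    by_contra! hba
    exact hne (by linarith [hx₀.1, hx₀.2, hx.1, hx.2])
  have hI : uIcc x₀ x ⊆ Icc a b := uIcc_subset_Icc hx₀ hx
  have hu : UniqueDiffOn ℝ (uIcc x₀ x) := uniqueDiffOn_uIcc hne
  have hU : UniqueDiffOn ℝ (Icc a b) := uniqueDiffOn_Icc hab
  have hf' : ContDiffOn ℝ ↑(n + 1) f (Icc a b) := mod_cast hf
  obtain ⟨ξ, hξ, hrem⟩ := taylor_mean_remainder_lagrange hne (hf.mono hI).of_succ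
    (((hf.mono hI).differentiableOn_iteratedDerivWithin (mod_cast n.lt_succ_self) hu).mono
      uIoo_subset_uIcc_self)
  rw [taylorWithinEval_subset hI hu hU hf.of_succ left_mem_uIcc,
    iteratedDerivWithin_subset hI hu hU hf' (uIoo_subset_uIcc_self hξ)] at hrem
  rw [hrem, abs_div, abs_mul, abs_pow, Nat.abs_cast]
  gcongr
  exact hM ξ (hI (uIoo_subset_uIcc_self hξ))

theorem taylorWithinEval_two (f : ℝ → ℝ) (s : Set ℝ) (x₀ x : ℝ) :
    taylorWithinEval f 2 s x₀ x =
      f x₀ + (x - x₀) * derivWithin f s x₀ + (x - x₀) ^ 2 / 2 * iteratedDerivWithin 2 f s x₀ := by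
  simp only [taylor_within_apply, Finset.sum_range_succ, Finset.sum_range_zero,
    iteratedDerivWithin_zero, iteratedDerivWithin_one, smul_eq_mul, factorial, Nat.cast_one]
  ring

section ZeroSNet

variable {l : ℝ}

theorem zerosAlpha0_add_zerosAlpha1_add_zerosAlpha2 (hl : l ≠ 0) :
    zerosAlpha0 l + zerosAlpha1 l + zerosAlpha2 l = 1 := by
  unfold zerosAlpha0 zerosAlpha1 zerosAlpha2
  field_simp
  ring

theorem zerosBeta_sub_zerosAlpha1_sub_two_mul_zerosAlpha2 (hl : l ≠ 0) :
    zerosBeta l - zerosAlpha1 l - 2 * zerosAlpha2 l = 1 := by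
  unfold zerosBeta zerosAlpha1 zerosAlpha2
  field_simp
  ring

theorem zerosAlpha1_add_four_mul_zerosAlpha2 (hl : l ≠ 0) :
    zerosAlpha1 l + 4 * zerosAlpha2 l = 1 := by
  unfold zerosAlpha1 zerosAlpha2
  field_simp
  ring

end ZeroSNet

theorem zerosnet_truncation_error (l : ℝ) (hl : l ≠ 0) (t h₀ M : ℝ)
    (y : ℝ → ℝ)
    (hy : ContDiffOn ℝ 3 y (Set.Icc (t - 2 * h₀) (t + h₀)))
    (hM : ∀ s ∈ Set.Icc (t - 2 * h₀) (t + h₀),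
      |iteratedDerivWithin 3 y (Set.Icc (t - 2 * h₀) (t + h₀)) s| ≤ M) :
    ∀ h : ℝ, 0 < h → h ≤ h₀ →
      |y (t + h) - zerosAlpha0 l * y t - zerosAlpha1 l * y (t - h)
          - zerosAlpha2 l * y (t - 2 * h)
          - h * zerosBeta l * derivWithin y (Set.Icc (t - 2 * h₀) (t + h₀)) t|
        ≤ (1 + |zerosAlpha1 l| + 8 * |zerosAlpha2 l|) / 6 * M * h ^ 3 := by
  intro h hh hle
  set I := Icc (t - 2 * h₀) (t + h₀)
  set E := fun x => y x - taylorWithinEval y 2 I t x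
  have ht : t ∈ I := ⟨by linarith, by linarith⟩
  have hE : ∀ x ∈ I, |E x| ≤ M * |x - t| ^ 3 / 6 := fun x hx =>
    (abs_sub_taylorWithinEval_le (n := 2) hy hM ht hx).trans_eq (by norm_num [factorial])
  have hE₁ : |E (t + h)| ≤ M * h ^ 3 / 6 := by
    simpa [abs_of_pos hh] using hE (t + h) ⟨by linarith, by linarith⟩
  have hE₂ : |E (t - h)| ≤ M * h ^ 3 / 6 := by
    simpa [abs_of_pos hh] using hE (t - h) ⟨by linarith, by linarith⟩
  have hE₃ : |E (t - 2 * h)| ≤ M * (2 * h) ^ 3 / 6 := by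
    have := hE (t - 2 * h) ⟨by linarith, by linarith⟩
    rwa [show t - 2 * h - t = -(2 * h) by ring, abs_neg,
      abs_of_pos (by positivity : (0 : ℝ) < 2 * h)] at this
  have hLTE : y (t + h) - zerosAlpha0 l * y t - zerosAlpha1 l * y (t - h)
      - zerosAlpha2 l * y (t - 2 * h) - h * zerosBeta l * derivWithin y I t
      = E (t + h) - zerosAlpha1 l * E (t - h) - zerosAlpha2 l * E (t - 2 * h) := by
    simp only [E, taylorWithinEval_two]
    linear_combination (-y t) * zerosAlpha0_add_zerosAlpha1_add_zerosAlpha2 hl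
      - (h * derivWithin y I t) * zerosBeta_sub_zerosAlpha1_sub_two_mul_zerosAlpha2 hl
      - (h ^ 2 / 2 * iteratedDerivWithin 2 y I t) * zerosAlpha1_add_four_mul_zerosAlpha2 hl
  rw [hLTE]
  calc _ ≤ |E (t + h)| + |zerosAlpha1 l| * |E (t - h)| + |zerosAlpha2 l| * |E (t - 2 * h)| := by
        rw [← abs_mul, ← abs_mul]
        exact (abs_sub _ _).trans (add_le_add_left (abs_sub _ _) _)
    _ ≤ M * h ^ 3 / 6 + |zerosAlpha1 l| * (M * h ^ 3 / 6)
        + |zerosAlpha2 l| * (M * (2 * h) ^ 3 / 6) := by gcongr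
    _ = (1 + |zerosAlpha1 l| + 8 * |zerosAlpha2 l|) / 6 * M * h ^ 3 := by ring
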